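/- Let p > 1 be an integer and define Q : ℝ → ℝ by Q(x) = ((p+1)/(2 cosh²(((p−1)/2)x)))^{1/(p−1)}. Then Q is smooth, positive, and satisfies Q″(x) + Q(x)^p = Q(x) for all x ∈ ℝ. -/

import Mathlib

open Real

/-- The ground state `Q` for (gKdV): `Q(x) = ((p+1)/(2 cosh²(((p−1)/2)x)))^{1/(p−1)}`. -/
noncomputable def groundState (p : ℕ) (x : ℝ) : ℝ :=
  (((p : ℝ) + 1) / (2 * Real.cosh (((p : ℝ) - 1) / 2 * x) ^ 2)) ^ ((1 : ℝ) / ((p : ℝ) - 1))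

/-- the ground state `Q` is smooth, positive, and satisfies
`Q″ + Q^p = Q`. -/
theorem groundState_solves_elliptic_equation (p : ℕ) (hp : 1 < p) :
    ContDiff ℝ (⊤ : ℕ∞) (groundState p) ∧
    (∀ x : ℝ, 0 < groundState p x) ∧
    ∀ x : ℝ, iteratedDeriv 2 (groundState p) x + (groundState p x) ^ p =
      groundState p x := by
  have hq1 : (1:ℝ) < (p:ℝ) := by exact_mod_cast hp
  set q : ℝ := (p:ℝ) with hqdef
  have hq0 : 0 < q - 1 := by linarith
  have hqne : q - 1 ≠ 0 := ne_of_gt hq0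
  set a : ℝ := (q - 1)/2 with hadef
  set s : ℝ := 2/(q - 1) with hsdef
  set c : ℝ := (q+1)/2 with hcdef
  have hc : 0 < c := by rw [hcdef]; linarith
  set A : ℝ := c ^ ((1:ℝ)/(q-1)) with hAdef
  have hA : 0 < A := Real.rpow_pos_of_pos hc _
  -- rewrite Q in convenient form
  have hQ : groundState p = fun x => A * (Real.cosh (a*x)) ^ (-s) := by
    funext x
    have ht : (0:ℝ) < Real.cosh (a*x) := Real.cosh_pos _
    unfold groundState
    rw [show ((p:ℝ)+1) / (2 * Real.cosh (((p:ℝ)-1)/2 * x) ^ 2)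
        = c / Real.cosh (a*x)^2 by rw [hcdef, hadef, hqdef]; ring_nf]
    rw [Real.div_rpow hc.le (by positivity), Real.rpow_neg ht.le, ← div_eq_mul_inv, hAdef]
    congr 1
    rw [← Real.rpow_natCast (Real.cosh (a*x)) 2, ← Real.rpow_mul ht.le]
    congr 1
    rw [hsdef]; push_cast; ring
  -- first derivative
  have hcosh : ∀ x : ℝ, HasDerivAt (fun x => Real.cosh (a*x)) (Real.sinh (a*x) * a) x := by
    intro x
    exact ((hasDerivAt_id x).const_mul a).cosh.congr_deriv (by simp)
  have hsinh : ∀ x : ℝ, HasDerivAt (fun x => Real.sinh (a*x)) (Real.cosh (a*x) * a) x := by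
    intro x
    exact ((hasDerivAt_id x).const_mul a).sinh.congr_deriv (by simp)
  set C : ℝ := A * (-s) * a with hCdef
  set G : ℝ → ℝ := fun x => C * (Real.cosh (a*x) ^ (-s-1) * Real.sinh (a*x)) with hGdef
  have hG : ∀ x : ℝ, HasDerivAt (fun x => A * (Real.cosh (a*x)) ^ (-s)) (G x) x := by
    intro x
    have h := ((Real.hasDerivAt_rpow_const (x := Real.cosh (a*x)) (p := -s)
        (Or.inl (ne_of_gt (Real.cosh_pos _)))).comp x (hcosh x)).const_mul A
    refine h.congr_deriv ?_
    rw [hGdef, hCdef]; ring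
  set D2 : ℝ → ℝ := fun x => C * (((-s-1) * Real.cosh (a*x) ^ (-s-1-1) * (Real.sinh (a*x) * a))
      * Real.sinh (a*x) + Real.cosh (a*x) ^ (-s-1) * (Real.cosh (a*x) * a)) with hD2def
  have hG' : ∀ x : ℝ, HasDerivAt G (D2 x) x := by
    intro x
    have h1 : HasDerivAt (fun x => Real.cosh (a*x) ^ (-s-1))
        ((-s-1) * Real.cosh (a*x) ^ (-s-1-1) * (Real.sinh (a*x) * a)) x := by
      have := ((Real.hasDerivAt_rpow_const (x := Real.cosh (a*x)) (p := -s-1)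
        (Or.inl (ne_of_gt (Real.cosh_pos _)))).comp x (hcosh x))
      refine this.congr_deriv ?_; ring
    exact ((h1.mul (hsinh x)).const_mul C).congr_deriv (by rw [hD2def])
  have hiter : ∀ x : ℝ, iteratedDeriv 2 (groundState p) x = D2 x := by
    intro x
    rw [iteratedDeriv_succ, iteratedDeriv_one, hQ]
    have hd1 : deriv (fun x => A * (Real.cosh (a*x)) ^ (-s)) = G := funext fun y => (hG y).deriv
    rw [hd1]
    exact (hG' x).deriv
  refine ⟨?_, ?_, ?_⟩
  · rw [hQ]
    refine contDiff_const.mul ?_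
    rw [contDiff_iff_contDiffAt]
    intro x
    exact (Real.contDiff_cosh.comp (contDiff_const.mul contDiff_id)).contDiffAt.rpow_const_of_ne
      (ne_of_gt (Real.cosh_pos _))
  · intro x
    rw [hQ]
    exact mul_pos hA (Real.rpow_pos_of_pos (Real.cosh_pos _) _)
  · intro x
    rw [hiter x, hQ, hD2def, hCdef]
    simp only []
    set t : ℝ := Real.cosh (a*x) with htdef
    set sh : ℝ := Real.sinh (a*x) with hshdef
    have ht : (0:ℝ) < t := Real.cosh_pos _
    have ht' : t ≠ 0 := ne_of_gt ht
    have k3 : sh^2 = t^2 - 1 := by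
      rw [hshdef, htdef]
      have := Real.cosh_sq (a*x); linarith
    have k1 : t ^ (-s-1-1) = t ^ (-s) / t^2 := by
      rw [eq_div_iff (by positivity), ← Real.rpow_natCast t 2, ← Real.rpow_add ht]
      congr 1; push_cast; ring
    have k2 : t ^ (-s-1) = t ^ (-s) / t := by
      rw [eq_div_iff ht', ← Real.rpow_add_one ht']
      congr 1; ring
    have kA : A ^ p = c * A := by
      rw [hAdef, ← Real.rpow_natCast (c ^ ((1:ℝ)/(q-1))) p, ← Real.rpow_mul hc.le]
      rw [show (1:ℝ)/(q-1) * (p:ℝ) = 1 + 1/(q-1) by rw [hqdef] at *; field_simp; try ring]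
      rw [Real.rpow_add hc, Real.rpow_one]
    have kt : (t ^ (-s)) ^ p = t ^ (-s) / t^2 := by
      rw [← Real.rpow_natCast (t ^ (-s)) p, ← Real.rpow_mul ht.le]
      rw [show (-s) * (p:ℝ) = (-s-1-1) by rw [hsdef, hqdef] at *; field_simp; try ring]
      exact k1
    rw [mul_pow, kA, kt, k1, k2]
    set u : ℝ := t ^ (-s) with hudef
    field_simp
    rw [hsdef, hadef, hcdef]
    field_simp
    linear_combination (u*(1+q)) * k3
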